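/- Let G and H be finite simple graphs. Then the lexicographical product G[H] is well-covered (every maximal independent set of G[H] has the same cardinality) if and only if both G and H are well-covered. -/

import Mathlib

open Finset

variable {V : Type*}

/-- A facet of a collection of faces `Δ` is a maximal face. -/
def IsFacet (Δ : Set (Finset V)) (F : Finset V) : Prop :=
  F ∈ Δ ∧ ∀ G ∈ Δ, F ⊆ G → F = G

/-- A complex is pure if all facets have the same cardinality. -/
def IsPure (Δ : Set (Finset V)) : Prop :=
  ∀ F G, IsFacet Δ F → IsFacet Δ G → F.card = G.card

/-- Deletion of a vertex from a complex. -/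
def del (Δ : Set (Finset V)) (x : V) : Set (Finset V) := {F ∈ Δ | x ∉ F}

/-- Link of a vertex in a complex. -/
def link [DecidableEq V] (Δ : Set (Finset V)) (x : V) : Set (Finset V) :=
  {F ∈ Δ | x ∉ F ∧ insert x F ∈ Δ}

/-- `F : Fin s → Finset V` is a shelling order of the facets of `Δ`. -/
def IsShelling [DecidableEq V] (Δ : Set (Finset V)) {s : ℕ} (F : Fin s → Finset V) : Prop :=
  (∀ i, IsFacet Δ (F i)) ∧ (∀ G, IsFacet Δ G → ∃ i, F i = G) ∧
  Function.Injective F ∧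
  (∀ i j : Fin s, j < i → ∃ x ∈ F i \ F j, ∃ k, k < i ∧ F i \ F k = {x})

/-- A complex is shellable if it is pure and admits a shelling order of its facets. -/
def Shellable [DecidableEq V] (Δ : Set (Finset V)) : Prop :=
  IsPure Δ ∧ ∃ (s : ℕ) (F : Fin s → Finset V), IsShelling Δ F

/-- A pure complex is vertex decomposable if it is a simplex (unique facet), or some vertex
has pure, vertex decomposable deletion and link. -/
inductive VertexDecomposable [DecidableEq V] : Set (Finset V) → Prop
  | simplex (Δ : Set (Finset V)) (h : ∃! F, IsFacet Δ F) : VertexDecomposable Δ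
  | step (Δ : Set (Finset V)) (x : V)
      (hdp : IsPure (del Δ x)) (hlp : IsPure (link Δ x))
      (hd : VertexDecomposable (del Δ x)) (hl : VertexDecomposable (link Δ x)) :
      VertexDecomposable Δ

/-- The independence complex of a graph: all independent sets. -/
def indComplex (G : SimpleGraph V) : Set (Finset V) :=
  {F | ∀ v ∈ F, ∀ w ∈ F, ¬ G.Adj v w}

/-- The lexicographical product `G[H]`. -/
def lexProd {α β : Type*} (G : SimpleGraph α) (H : SimpleGraph β) :
    SimpleGraph (α × β) where
  Adj p q := G.Adj p.1 q.1 ∨ (p.1 = q.1 ∧ H.Adj p.2 q.2)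
  symm := by
    constructor
    rintro p q (h | ⟨h1, h2⟩)
    · exact Or.inl h.symm
    · exact Or.inr ⟨h1.symm, h2.symm⟩
  loopless := by
    constructor
    rintro p (h | ⟨_, h⟩)
    · exact G.loopless.irrefl _ h
    · exact H.loopless.irrefl _ h

/-- The independence number of a graph. -/
noncomputable def indepNum (G : SimpleGraph V) : ℕ :=
  sSup {n | ∃ F : Finset V, F ∈ indComplex G ∧ F.card = n}

/-- The expansion of a graph `G`, where vertex `v` is replaced by `s v` copies,
and distinct vertices `(i,j)` and `(k,l)` are adjacent iff `i ~ k` in `G` or `i = k`. -/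
def expansion (G : SimpleGraph V) (s : V → ℕ) : SimpleGraph (Σ v : V, Fin (s v)) where
  Adj p q := p ≠ q ∧ (G.Adj p.1 q.1 ∨ p.1 = q.1)
  symm := by
    constructor
    rintro p q ⟨h1, h2 | h2⟩
    · exact ⟨h1.symm, Or.inl h2.symm⟩
    · exact ⟨h1.symm, Or.inr h2.symm⟩
  loopless := by constructor; rintro p ⟨h, _⟩; exact h rfl

/-- The circulant graph `C_n(S)`: vertices `x_a`, `x_b` are adjacent iff
`|a-b| ∈ S` or `n - |a-b| ∈ S`. -/
def circulant (n : ℕ) (S : Set ℕ) : SimpleGraph (Fin n) where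
  Adj a b := a ≠ b ∧ ((max a.val b.val - min a.val b.val) ∈ S ∨
      (n - (max a.val b.val - min a.val b.val)) ∈ S)
  symm := by
    constructor
    rintro a b ⟨h1, h2⟩
    refine ⟨h1.symm, ?_⟩
    rwa [max_comm, min_comm]
  loopless := by constructor; rintro a ⟨h, _⟩; exact h rfl

/-!
Maximal independent sets are exactly the independent dominating sets. Hence if `A` and `B` are
maximal independent in `G` and `H`, then `A ×ˢ B` is maximal independent in `G[H]`; conversely,
a maximal independent set `S` of `G[H]` projects to a maximal independent set of `G`, and over
each vertex of that projection its fibre is maximal independent in `H`. So when `G` and `H` are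
well-covered every such `S` has `|A| · |B|` elements, while the sets `A ×ˢ B` show that
well-coveredness of `G[H]` forces that of `G` and `H` (cancelling a nonzero factor).
-/

section Facets

lemma isFacet_iff_maximal {Δ : Set (Finset V)} {F : Finset V} :
    IsFacet Δ F ↔ Maximal (· ∈ Δ) F :=
  ⟨fun h => ⟨h.1, fun _ hK hFK => (h.2 _ hK hFK).ge⟩,
    fun h => ⟨h.1, fun _ hK hFK => hFK.antisymm (h.2 hK hFK)⟩⟩

lemma exists_isFacet_indComplex [Finite V] (G : SimpleGraph V) :
    ∃ F, IsFacet (indComplex G) F := by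
  obtain ⟨F, -, hF⟩ :=
    (Set.toFinite (indComplex G)).exists_le_maximal (a := ∅) (by simp [indComplex])
  exact ⟨F, isFacet_iff_maximal.2 hF⟩

variable {G : SimpleGraph V} {F : Finset V}

lemma isFacet_indComplex_iff :
    IsFacet (indComplex G) F ↔ F ∈ indComplex G ∧ ∀ v ∉ F, ∃ w ∈ F, G.Adj v w := by
  classical
  refine ⟨fun hF => ⟨hF.1, fun v hv => ?_⟩, fun ⟨hF, hdom⟩ => ⟨hF, fun K hK hFK => ?_⟩⟩
  · by_contra! hfree
    have hins : insert v F ∈ indComplex G := by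
      intro x hx y hy hxy
      rw [mem_insert] at hx hy
      rcases hx with rfl | hx <;> rcases hy with rfl | hy
      · exact G.loopless.irrefl _ hxy
      · exact hfree _ hy hxy
      · exact hfree _ hx hxy.symm
      · exact hF.1 x hx y hy hxy
    exact hv (hF.2 _ hins (subset_insert v F) ▸ mem_insert_self v F)
  · refine hFK.antisymm fun v hvK => ?_
    by_contra hvF
    obtain ⟨w, hwF, hvw⟩ := hdom v hvF
    exact hK v hvK w (hFK hwF) hvw

lemma nonempty_of_isFacet_indComplex [Nonempty V] (hF : IsFacet (indComplex G) F) :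
    F.Nonempty := by
  obtain ⟨v⟩ := ‹Nonempty V›
  by_contra hempty
  rw [not_nonempty_iff_eq_empty] at hempty
  obtain ⟨w, hw, -⟩ := (isFacet_indComplex_iff.1 hF).2 v (by simp [hempty])
  simp [hempty] at hw

end Facets

section LexProd

variable {α β : Type*} {G : SimpleGraph α} {H : SimpleGraph β}

lemma product_mem_indComplex_lexProd {A : Finset α} {B : Finset β} (hA : A ∈ indComplex G)
    (hB : B ∈ indComplex H) : A ×ˢ B ∈ indComplex (lexProd G H) := by
  rintro p hp q hq (h | ⟨-, h⟩)
  · exact hA _ (mem_product.1 hp).1 _ (mem_product.1 hq).1 h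
  · exact hB _ (mem_product.1 hp).2 _ (mem_product.1 hq).2 h

lemma isFacet_product_lexProd [Nonempty β] {A : Finset α} {B : Finset β}
    (hA : IsFacet (indComplex G) A) (hB : IsFacet (indComplex H) B) :
    IsFacet (indComplex (lexProd G H)) (A ×ˢ B) := by
  obtain ⟨b₀, hb₀⟩ := nonempty_of_isFacet_indComplex hB
  rw [isFacet_indComplex_iff] at hA hB ⊢
  refine ⟨product_mem_indComplex_lexProd hA.1 hB.1, fun ⟨a, b⟩ hab => ?_⟩
  by_cases ha : a ∈ A
  · obtain ⟨b', hb', hbb'⟩ := hB.2 b fun hb => hab (mem_product.2 ⟨ha, hb⟩)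
    exact ⟨(a, b'), mem_product.2 ⟨ha, hb'⟩, Or.inr ⟨rfl, hbb'⟩⟩
  · obtain ⟨a', ha', haa'⟩ := hA.2 a ha
    exact ⟨(a', b₀), mem_product.2 ⟨ha', hb₀⟩, Or.inl haa'⟩

noncomputable def fiber (S : Finset (α × β)) (a : α) : Finset β :=
  S.preimage (Prod.mk a) (Prod.mk_right_injective a).injOn

@[simp]
lemma mem_fiber {S : Finset (α × β)} {a : α} {b : β} : b ∈ fiber S a ↔ (a, b) ∈ S :=
  mem_preimage

lemma card_filter_fst_eq_card_fiber [DecidableEq α] (S : Finset (α × β)) (a : α) :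
    #{p ∈ S | p.1 = a} = #(fiber S a) := by
  refine card_nbij' Prod.snd (Prod.mk a) ?_ (fun b hb => ?_) ?_ (fun b _ => rfl)
  · intro p hp
    obtain ⟨hpS, rfl⟩ := mem_filter.1 hp
    exact mem_fiber.2 hpS
  · simpa using hb
  · intro p hp
    obtain ⟨-, rfl⟩ := mem_filter.1 hp
    rfl

variable {S : Finset (α × β)}

lemma isFacet_image_fst_of_isFacet_lexProd [DecidableEq α] [Nonempty β]
    (hS : IsFacet (indComplex (lexProd G H)) S) : IsFacet (indComplex G) (S.image Prod.fst) := by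
  rw [isFacet_indComplex_iff] at hS ⊢
  refine ⟨?_, fun a ha => ?_⟩
  · simp only [indComplex, Set.mem_ofPred_eq, mem_image] at hS ⊢
    rintro _ ⟨p, hp, rfl⟩ _ ⟨q, hq, rfl⟩ h
    exact hS.1 p hp q hq (Or.inl h)
  · obtain ⟨b⟩ := ‹Nonempty β›
    obtain ⟨q, hq, h | ⟨rfl, -⟩⟩ := hS.2 (a, b) fun h => ha (mem_image_of_mem _ h)
    · exact ⟨q.1, mem_image_of_mem _ hq, h⟩
    · exact absurd (mem_image_of_mem _ hq) ha

lemma isFacet_fiber_of_isFacet_lexProd [DecidableEq α]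
    (hS : IsFacet (indComplex (lexProd G H)) S) {a : α} (ha : a ∈ S.image Prod.fst) :
    IsFacet (indComplex H) (fiber S a) := by
  rw [isFacet_indComplex_iff] at hS ⊢
  refine ⟨fun b hb b' hb' h => hS.1 _ (mem_fiber.1 hb) _ (mem_fiber.1 hb') (Or.inr ⟨rfl, h⟩),
    fun b hb => ?_⟩
  obtain ⟨q, hq, h | ⟨rfl, h⟩⟩ := hS.2 (a, b) (mt mem_fiber.2 hb)
  · obtain ⟨p, hp, rfl⟩ := mem_image.1 ha
    exact absurd (Or.inl h) (hS.1 p hp q hq)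
  · exact ⟨q.2, mem_fiber.2 hq, h⟩

lemma card_eq_mul_of_isFacet_lexProd [Nonempty β]
    (hG : IsPure (indComplex G)) (hH : IsPure (indComplex H))
    {A : Finset α} (hA : IsFacet (indComplex G) A) {B : Finset β} (hB : IsFacet (indComplex H) B)
    (hS : IsFacet (indComplex (lexProd G H)) S) :
    #S = #A * #B := by
  classical
  calc #S = ∑ a ∈ S.image Prod.fst, #(fiber S a) := by
        rw [card_eq_sum_card_image Prod.fst S]
        exact sum_congr rfl fun a _ => card_filter_fst_eq_card_fiber S a
    _ = ∑ a ∈ S.image Prod.fst, #B :=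
        sum_congr rfl fun a ha => hH _ _ (isFacet_fiber_of_isFacet_lexProd hS ha) hB
    _ = #A * #B := by
        rw [sum_const, smul_eq_mul, hG _ _ (isFacet_image_fst_of_isFacet_lexProd hS) hA]

end LexProd

theorem stmt6 {α β : Type*} [Fintype α] [Fintype β] [Nonempty α] [Nonempty β]
    (G : SimpleGraph α) (H : SimpleGraph β) :
    IsPure (indComplex (lexProd G H)) ↔
      IsPure (indComplex G) ∧ IsPure (indComplex H) := by
  obtain ⟨A₀, hA₀⟩ := exists_isFacet_indComplex G
  obtain ⟨B₀, hB₀⟩ := exists_isFacet_indComplex H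
  refine ⟨fun hpure => ⟨fun A A' hA hA' => ?_, fun B B' hB hB' => ?_⟩, ?_⟩
  · have h := hpure _ _ (isFacet_product_lexProd hA hB₀) (isFacet_product_lexProd hA' hB₀)
    rw [card_product, card_product] at h
    exact Nat.eq_of_mul_eq_mul_right (nonempty_of_isFacet_indComplex hB₀).card_pos h
  · have h := hpure _ _ (isFacet_product_lexProd hA₀ hB) (isFacet_product_lexProd hA₀ hB')
    rw [card_product, card_product] at h
    exact Nat.eq_of_mul_eq_mul_left (nonempty_of_isFacet_indComplex hA₀).card_pos h
  · rintro ⟨hG, hH⟩ S T hS hT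
    rw [card_eq_mul_of_isFacet_lexProd hG hH hA₀ hB₀ hS,
      card_eq_mul_of_isFacet_lexProd hG hH hA₀ hB₀ hT]
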